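/- Let Q ≥ 2 and let q_{j-1}, q_j be denominators of consecutive fractions γ_{j-1} < γ_j in the Farey sequence F_Q. Then T(q_{j-1}/Q, q_j/Q) = (q_j/Q, q_{j+1}/Q), where T(x,y) = (y, ⌊(1+x)/y⌋·y − x). -/

import Mathlib

open MeasureTheory

/-- The Farey fractions of order `Q`, as a set of rationals in `(0,1]`
with denominator at most `Q` (rationals are automatically in lowest terms). -/
def fareySet (Q : ℕ) : Set ℚ := {x | 0 < x ∧ x ≤ 1 ∧ x.den ≤ Q}

/-- `IsFarey Q N p q` asserts that `i ↦ p i / q i` (for `1 ≤ i ≤ N`) enumerates the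
Farey fractions of order `Q` in increasing order, in lowest terms, extended to all
integer indices by the periodicity `γ_{i+N} = γ_i + 1`. -/
structure IsFarey (Q N : ℕ) (p q : ℤ → ℤ) : Prop where
  qpos : ∀ i : ℤ, 0 < q i
  coprime : ∀ i : ℤ, Int.gcd (p i) (q i) = 1
  mono : ∀ i j : ℤ, i < j → (p i : ℚ) / (q i) < (p j : ℚ) / (q j)
  mem : ∀ i : ℤ, 1 ≤ i → i ≤ (N : ℤ) → ((p i : ℚ) / (q i)) ∈ fareySet Q
  surj : ∀ x ∈ fareySet Q, ∃ i : ℤ, 1 ≤ i ∧ i ≤ (N : ℤ) ∧ (p i : ℚ) / (q i) = x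
  period_p : ∀ i : ℤ, p (i + N) = p i + q i
  period_q : ∀ i : ℤ, q (i + N) = q i

/-- The `k`-index `ν_k(γ_i) = p_{i+k-1} q_{i-1} - p_{i-1} q_{i+k-1}`. -/
def nuk (p q : ℤ → ℤ) (k : ℕ) (i : ℤ) : ℤ :=
  p (i + k - 1) * q (i - 1) - p (i - 1) * q (i + k - 1)

/-- The Farey triangle `𝒯 = {(x,y) ∈ [0,1]² : x + y > 1}`. -/
def fareyTriangle : Set (ℝ × ℝ) :=
  {v | v.1 ∈ Set.Icc (0 : ℝ) 1 ∧ v.2 ∈ Set.Icc (0 : ℝ) 1 ∧ 1 < v.1 + v.2}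

/-- The Farey triangle map `T(x,y) = (y, ⌊(1+x)/y⌋·y − x)`. -/
noncomputable def Tmap (v : ℝ × ℝ) : ℝ × ℝ :=
  (v.2, (⌊(1 + v.1) / v.2⌋ : ℝ) * v.2 - v.1)


/-!
Consecutive Farey fractions `p/q < p'/q'` of order `Q` satisfy `q p' - p q' = 1` and
`Q < q + q'`: the solution `(x, y)` of `q y - p x = 1` with `Q - q < x ≤ Q` is a Farey fraction
`y/x` just after `p/q`, and a fraction strictly between them would have denominator at least
`q + x > Q`. By periodicity both relations hold at every index. Comparing them at `j - 1` and `j`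
gives `q_j ∣ q_{j-1} + q_{j+1}`, and since `q_{j+1} ≤ Q < q_j + q_{j+1}` the quotient is
`⌊(Q + q_{j-1}) / q_j⌋`, which is the coefficient used by `T`.
-/

open Function

theorem exists_mul_sub_mul_eq_one_mem_Ioc {a b : ℤ} (hb : 0 < b) (h : IsCoprime a b) (Q : ℤ) :
    ∃ x y : ℤ, b * y - a * x = 1 ∧ x ∈ Set.Ioc (Q - b) Q := by
  obtain ⟨u, v, huv⟩ := h
  have hdiv := Int.emod_add_mul_ediv (Q + u) b
  have hr₀ := Int.emod_nonneg (Q + u) hb.ne'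
  have hr₁ := Int.emod_lt_of_pos (Q + u) hb
  exact ⟨-u + b * ((Q + u) / b), v + a * ((Q + u) / b), by linear_combination huv,
    by omega, by omega⟩

theorem add_le_of_mul_sub_mul_eq_one {a b c d x y : ℤ} (hb : 0 < b) (hx : 0 < x)
    (hdet : b * y - a * x = 1) (hac : a * d < c * b) (hcy : c * x < y * d) : b + x ≤ d := by
  have hd : d = b * (y * d - c * x) + x * (c * b - a * d) := by linear_combination (-d) * hdet
  have h₁ : b ≤ b * (y * d - c * x) := le_mul_of_one_le_right hb.le (by omega)
  have h₂ : x ≤ x * (c * b - a * d) := le_mul_of_one_le_right hx.le (by omega)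
  omega

theorem dvd_add_of_mul_sub_mul_eq_one {p₀ q₀ p₁ q₁ p₂ q₂ : ℤ} (h₀ : q₀ * p₁ - p₀ * q₁ = 1)
    (h₁ : q₁ * p₂ - p₁ * q₂ = 1) : q₁ ∣ q₀ + q₂ := by
  have hcop : IsCoprime q₁ p₁ := ⟨p₂, -q₂, by linear_combination h₁⟩
  exact hcop.dvd_of_dvd_mul_left ⟨p₀ + p₂, by linear_combination h₀ - h₁⟩

theorem Tmap_div_eq {Q : ℝ} (hQ : 0 < Q) {a b c k : ℤ} (hb : 0 < b) (hk : a + c = b * k)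
    (hc : (c : ℝ) ≤ Q) (hQc : Q < b + c) : Tmap (a / Q, b / Q) = (b / Q, c / Q) := by
  have hbR : (0 : ℝ) < b := by exact_mod_cast hb
  have hkR : (a : ℝ) + c = b * k := by exact_mod_cast hk
  have hfloor : ⌊(1 + a / Q) / (b / Q)⌋ = k := by
    rw [show (1 + a / Q) / (b / Q) = (Q + a) / b by field_simp, Int.floor_eq_iff,
      le_div_iff₀ hbR, div_lt_iff₀ hbR]
    constructor <;> linarith
  simp only [Tmap, hfloor, Prod.mk.injEq, true_and]
  field_simp
  linarith

theorem div_mem_fareySet {Q : ℕ} {a b : ℤ} (ha : 0 < a) (hab : a ≤ b) (hbQ : b ≤ Q)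
    (h : Int.gcd a b = 1) : (a : ℚ) / b ∈ fareySet Q := by
  have hb : 0 < b := ha.trans_le hab
  have hden := Rat.den_div_eq_of_coprime hb h
  refine ⟨by positivity, (div_le_one (by exact_mod_cast hb)).mpr (by exact_mod_cast hab), ?_⟩
  omega

namespace IsFarey

variable {Q N : ℕ} {p q : ℤ → ℤ}

theorem strictMono (hF : IsFarey Q N p q) : StrictMono fun i => (p i : ℚ) / q i :=
  fun i j => hF.mono i j

theorem N_pos (hF : IsFarey Q N p q) : 0 < N := by
  by_contra! hN
  have hp := hF.period_p 0
  have hq := hF.qpos 0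
  simp only [Nat.le_zero.mp hN, Nat.cast_zero, add_zero] at hp
  omega

theorem q_le_of_mem (hF : IsFarey Q N p q) {i : ℤ} (h1 : 1 ≤ i) (hN : i ≤ N) : q i ≤ Q := by
  have hden := Rat.den_div_eq_of_coprime (hF.qpos i) (hF.coprime i)
  have hmem := (hF.mem i h1 hN).2.2
  omega

theorem q_le (hF : IsFarey Q N p q) (i : ℤ) : q i ≤ Q := by
  obtain ⟨i', ⟨h1, hN⟩, hi⟩ :=
    Periodic.exists_mem_Ico hF.period_q (by exact_mod_cast hF.N_pos) i 1
  rw [hi]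
  exact hF.q_le_of_mem h1 (by omega)

theorem one_le_Q (hF : IsFarey Q N p q) : 1 ≤ Q := by
  have := hF.q_le 0
  have := hF.qpos 0
  omega

theorem p_pos (hF : IsFarey Q N p q) {i : ℤ} (h1 : 1 ≤ i) (hN : i ≤ N) : 0 < p i := by
  have := (hF.mem i h1 hN).1
  exact_mod_cast (div_pos_iff_of_pos_right (by exact_mod_cast hF.qpos i)).mp this

theorem mem_Icc_of_mem_fareySet (hF : IsFarey Q N p q) {x : ℚ} (hx : x ∈ fareySet Q) :
    x ∈ Set.Icc ((p 1 : ℚ) / q 1) ((p N : ℚ) / q N) := by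
  obtain ⟨k, hk1, hkN, rfl⟩ := hF.surj x hx
  exact ⟨hF.strictMono.monotone hk1, hF.strictMono.monotone hkN⟩

theorem succ_le_of_lt (hF : IsFarey Q N p q) {x : ℚ} (hx : x ∈ fareySet Q) {i : ℤ}
    (hi : (p i : ℚ) / q i < x) : (p (i + 1) : ℚ) / q (i + 1) ≤ x := by
  obtain ⟨k, -, -, rfl⟩ := hF.surj x hx
  exact hF.strictMono.monotone (Int.add_one_le_of_lt (hF.strictMono.lt_iff_lt.mp hi))

theorem first (hF : IsFarey Q N p q) : p 1 = 1 ∧ q 1 = Q := by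
  have hQ : (0 : ℤ) < Q := by exact_mod_cast hF.one_le_Q
  have hmem : ((1 : ℤ) : ℚ) / (Q : ℤ) ∈ fareySet Q :=
    div_mem_fareySet one_pos (by exact_mod_cast hF.one_le_Q) le_rfl (Int.gcd_one_left _)
  have hp := hF.p_pos le_rfl (by exact_mod_cast hF.N_pos)
  have hge : ((1 : ℤ) : ℚ) / (Q : ℤ) ≤ (p 1 : ℚ) / q 1 := by
    rw [div_le_div_iff₀ (by exact_mod_cast hQ) (by exact_mod_cast hF.qpos 1)]
    have : 1 * q 1 ≤ p 1 * Q := by nlinarith [hF.q_le 1]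
    exact_mod_cast this
  exact Rat.div_int_inj (hF.qpos 1) hQ (hF.coprime 1) (Int.gcd_one_left _)
    ((hF.mem_Icc_of_mem_fareySet hmem).1.antisymm hge)

theorem last (hF : IsFarey Q N p q) : p N = 1 ∧ q N = 1 := by
  have hmem : ((1 : ℤ) : ℚ) / (1 : ℤ) ∈ fareySet Q :=
    div_mem_fareySet one_pos le_rfl (by exact_mod_cast hF.one_le_Q) (Int.gcd_one_left _)
  have hle := (hF.mem N (by exact_mod_cast hF.N_pos) le_rfl).2.1
  exact Rat.div_int_inj (hF.qpos N) one_pos (hF.coprime N) (Int.gcd_one_left _)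
    (hle.trans (by norm_num) |>.antisymm (hF.mem_Icc_of_mem_fareySet hmem).2)

theorem det_eq_one_and_lt_add_of_mem (hF : IsFarey Q N p q) {i : ℤ} (h1 : 1 ≤ i) (hN : i < N) :
    q i * p (i + 1) - p i * q (i + 1) = 1 ∧ (Q : ℤ) < q i + q (i + 1) := by
  have hb := hF.qpos i
  have hbQ := hF.q_le i
  have hlt := hF.strictMono (lt_add_one i)
  have hp := hF.p_pos h1 hN.le
  have hpq : p i < q i := by
    have := hlt.trans_le (hF.mem (i + 1) (by omega) (by omega)).2.1
    exact_mod_cast (div_lt_one (by exact_mod_cast hb)).mp this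
  obtain ⟨x, y, hxy, hQx, hxQ⟩ :=
    exists_mul_sub_mul_eq_one_mem_Ioc hb (Int.isCoprime_iff_gcd_eq_one.mpr (hF.coprime i)) Q
  have hx : 0 < x := by omega
  have hy : 0 < y := by nlinarith
  have hyx : y ≤ x := by nlinarith
  have hcop : Int.gcd y x = 1 :=
    Int.isCoprime_iff_gcd_eq_one.mp ⟨q i, -p i, by linear_combination hxy⟩
  have hmem := div_mem_fareySet hy hyx hxQ hcop
  have hyx_gt : (p i : ℚ) / q i < (y : ℚ) / x := by
    rw [div_lt_div_iff₀ (by exact_mod_cast hb) (by exact_mod_cast hx)]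
    exact_mod_cast (by linarith : p i * x < y * q i)
  have heq : (p (i + 1) : ℚ) / q (i + 1) = (y : ℚ) / x := by
    refine (hF.succ_le_of_lt hmem hyx_gt).eq_of_not_lt fun hnext => ?_
    rw [div_lt_div_iff₀ (by exact_mod_cast hb) (by exact_mod_cast hF.qpos _)] at hlt
    rw [div_lt_div_iff₀ (by exact_mod_cast hF.qpos _) (by exact_mod_cast hx)] at hnext
    have := add_le_of_mul_sub_mul_eq_one hb hx hxy (by exact_mod_cast hlt)
      (by exact_mod_cast hnext)
    have := hF.q_le (i + 1)
    omega
  obtain ⟨rfl, rfl⟩ := Rat.div_int_inj (hF.qpos _) hx (hF.coprime _) hcop heq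
  exact ⟨by linear_combination hxy, by omega⟩

theorem det_eq_one_and_lt_add (hF : IsFarey Q N p q) (i : ℤ) :
    q i * p (i + 1) - p i * q (i + 1) = 1 ∧ (Q : ℤ) < q i + q (i + 1) := by
  have hper : Periodic (fun i => (q i * p (i + 1) - p i * q (i + 1), q i + q (i + 1))) N := by
    intro i
    simp only [add_right_comm i (N : ℤ) 1, hF.period_p, hF.period_q, Prod.mk.injEq, and_true]
    ring
  obtain ⟨i', ⟨h0, hN⟩, hi⟩ := hper.exists_mem_Ico₀ (by exact_mod_cast hF.N_pos) i
  simp only [Prod.mk.injEq] at hi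
  rw [hi.1, hi.2]
  rcases h0.eq_or_lt with rfl | h0
  · -- `γ₀ = γ_N - 1 = 0/1` and `γ₁ = 1/Q`
    have hp := hF.period_p 0
    have hq := hF.period_q 0
    simp only [zero_add, hF.last] at hp hq
    have hp0 : p 0 = 0 := by omega
    simp only [zero_add, hF.first, hp0, ← hq]
    omega
  · exact hF.det_eq_one_and_lt_add_of_mem h0 hN

end IsFarey

theorem Tmap_farey_denominators_general (Q N : ℕ) (p q : ℤ → ℤ)
    (hF : IsFarey Q N p q) (j : ℤ) :
    Tmap ((q (j - 1) : ℝ) / Q, (q j : ℝ) / Q) = ((q j : ℝ) / Q, (q (j + 1) : ℝ) / Q) := by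
  obtain ⟨hdet₀, -⟩ := hF.det_eq_one_and_lt_add (j - 1)
  obtain ⟨hdet₁, hgap⟩ := hF.det_eq_one_and_lt_add j
  rw [sub_add_cancel] at hdet₀
  obtain ⟨k, hk⟩ := dvd_add_of_mul_sub_mul_eq_one hdet₀ hdet₁
  exact Tmap_div_eq (by exact_mod_cast hF.one_le_Q) (hF.qpos j) hk
    (by exact_mod_cast hF.q_le (j + 1)) (by exact_mod_cast hgap)

/-- `T(q_{j-1}/Q, q_j/Q) = (q_j/Q, q_{j+1}/Q)` for consecutive Farey denominators. -/
theorem Tmap_farey_denominators (Q N : ℕ) (p q : ℤ → ℤ) (hQ : 2 ≤ Q)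
    (hF : IsFarey Q N p q) (j : ℤ) (h1 : 1 ≤ j) (h2 : j ≤ (N : ℤ)) :
    Tmap ((q (j - 1) : ℝ) / Q, (q j : ℝ) / Q) = ((q j : ℝ) / Q, (q (j + 1) : ℝ) / Q) :=
  Tmap_farey_denominators_general Q N p q hF j
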